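/- Let R be a reverse homogeneous equidepth step bisimulation between stable configuration structures C and D. If R(X, Y), then for every n ∈ ℕ the multiset of labels of events of X at depth exactly n equals the multiset of labels of events of Y at depth exactly n. -/

import Mathlib

universe u v

/-- A configuration structure over event type `E` and label alphabet `L`:
a family of finite sets of events (configurations) with a labelling. -/
structure CS (E : Type u) (L : Type v) where
  C : Set (Set E)
  finite : ∀ X ∈ C, X.Finite
  label : E → L

namespace CS

variable {E E₁ E₂ : Type u} {L : Type v}

/-- Stability: rooted, connected, closed under bounded unions and intersections. -/
def IsStable (𝒞 : CS E L) : Prop :=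
  ∅ ∈ 𝒞.C ∧
  (∀ X ∈ 𝒞.C, X ≠ ∅ → ∃ e ∈ X, X \ {e} ∈ 𝒞.C) ∧
  (∀ X ∈ 𝒞.C, ∀ Y ∈ 𝒞.C, ∀ Z ∈ 𝒞.C, X ∪ Y ⊆ Z → X ∪ Y ∈ 𝒞.C) ∧
  (∀ X ∈ 𝒞.C, ∀ Y ∈ 𝒞.C, ∀ Z ∈ 𝒞.C, X ∪ Y ⊆ Z → X ∩ Y ∈ 𝒞.C)

/-- Causality: `d ≤_X e` iff every sub-configuration of `X` containing `e` contains `d`. -/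
def le (𝒞 : CS E L) (X : Set E) (d e : E) : Prop :=
  ∀ Y ∈ 𝒞.C, Y ⊆ X → e ∈ Y → d ∈ Y

/-- Strict causality `d <_X e`. -/
def lt (𝒞 : CS E L) (X : Set E) (d e : E) : Prop :=
  le 𝒞 X d e ∧ d ≠ e

/-- Concurrency within a configuration. -/
def co (𝒞 : CS E L) (X : Set E) (d e : E) : Prop :=
  ¬ lt 𝒞 X d e ∧ ¬ lt 𝒞 X e d

/-- The set of minimal events of a configuration. -/
def minE (𝒞 : CS E L) (X : Set E) : Set E :=
  {e | e ∈ X ∧ ∀ d ∈ X, ¬ lt 𝒞 X d e}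

/-- Depth of an event in a configuration: the length of the longest
causal chain (w.r.t. `<_X`) in `X` up to and including `e`. -/
noncomputable def depth (𝒞 : CS E L) (X : Set E) (e : E) : ℕ :=
  sSup {n | ∃ l : List E, l.length = n ∧ l.Chain' (lt 𝒞 X) ∧
    (∀ x ∈ l, x ∈ X) ∧ l.getLast? = some e}

/-- Multiset of labels of a (finite) set of events. -/
noncomputable def labelMS (𝒞 : CS E L) (S : Set E) : Multiset L := by
  classical exact if h : S.Finite then h.toFinset.val.map 𝒞.label else 0

/-- Single-event forward transition `X —a→ X'`. -/
def FTrans (𝒞 : CS E L) (a : L) (X X' : Set E) : Prop :=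
  X ∈ 𝒞.C ∧ X' ∈ 𝒞.C ∧ X ⊆ X' ∧ ∃ e, X' \ X = {e} ∧ 𝒞.label e = a

/-- Single-event reverse transition `X ⇝a X'`. -/
def RTrans (𝒞 : CS E L) (a : L) (X X' : Set E) : Prop :=
  FTrans 𝒞 a X' X

/-- Step transition `X —A→ X'`: the added events are pairwise concurrent
in `X'` and carry the label multiset `A`. -/
def Step (𝒞 : CS E L) (A : Multiset L) (X X' : Set E) : Prop :=
  X ∈ 𝒞.C ∧ X' ∈ 𝒞.C ∧ X ⊆ X' ∧ ∃ F : Finset E, ↑F = X' \ X ∧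
    (∀ d ∈ F, ∀ e ∈ F, co 𝒞 X' d e) ∧ F.val.map 𝒞.label = A

/-- Reverse step transition `X ⇝A X'`. -/
def RStep (𝒞 : CS E L) (A : Multiset L) (X X' : Set E) : Prop :=
  Step 𝒞 A X' X

/-- Equidepth step: all added events have the same depth in `X'`. -/
def EqStep (𝒞 : CS E L) (A : Multiset L) (X X' : Set E) : Prop :=
  Step 𝒞 A X X' ∧ ∀ d ∈ X' \ X, ∀ e ∈ X' \ X, depth 𝒞 X' d = depth 𝒞 X' e

/-- Reverse equidepth step `X ⇝A= X'`. -/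
def REqStep (𝒞 : CS E L) (A : Multiset L) (X X' : Set E) : Prop :=
  EqStep 𝒞 A X' X

/-- Single-event forward transition with depth: the new event has label `a`
and depth `k` in `X'`. -/
def FTransD (𝒞 : CS E L) (a : L) (k : ℕ) (X X' : Set E) : Prop :=
  X ∈ 𝒞.C ∧ X' ∈ 𝒞.C ∧ X ⊆ X' ∧
    ∃ e, X' \ X = {e} ∧ 𝒞.label e = a ∧ depth 𝒞 X' e = k

/-- Single-event reverse transition with depth. -/
def RTransD (𝒞 : CS E L) (a : L) (k : ℕ) (X X' : Set E) : Prop :=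
  FTransD 𝒞 a k X' X

/-- A multiset of labels is homogeneous if all its elements are equal. -/
def Hom (A : Multiset L) : Prop := ∀ a ∈ A, ∀ b ∈ A, a = b

/-- `R` is a relation between configurations of `𝒞` and `𝒟`, containing `(∅, ∅)`. -/
def Dom (𝒞 : CS E₁ L) (𝒟 : CS E₂ L) (R : Set E₁ → Set E₂ → Prop) : Prop :=
  R ∅ ∅ ∧ ∀ X Y, R X Y → X ∈ 𝒞.C ∧ Y ∈ 𝒟.C

/-- Interleaving bisimulation. -/
def IsIB (𝒞 : CS E₁ L) (𝒟 : CS E₂ L) (R : Set E₁ → Set E₂ → Prop) : Prop :=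
  Dom 𝒞 𝒟 R ∧ ∀ X Y, R X Y →
    (∀ a X', FTrans 𝒞 a X X' → ∃ Y', FTrans 𝒟 a Y Y' ∧ R X' Y') ∧
    (∀ a Y', FTrans 𝒟 a Y Y' → ∃ X', FTrans 𝒞 a X X' ∧ R X' Y')

/-- Reverse bisimulation: an IB also matching reverse single-event transitions. -/
def IsRB (𝒞 : CS E₁ L) (𝒟 : CS E₂ L) (R : Set E₁ → Set E₂ → Prop) : Prop :=
  IsIB 𝒞 𝒟 R ∧ ∀ X Y, R X Y →
    (∀ a X', RTrans 𝒞 a X X' → ∃ Y', RTrans 𝒟 a Y Y' ∧ R X' Y') ∧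
    (∀ a Y', RTrans 𝒟 a Y Y' → ∃ X', RTrans 𝒞 a X X' ∧ R X' Y')

/-- Step bisimulation. -/
def IsSB (𝒞 : CS E₁ L) (𝒟 : CS E₂ L) (R : Set E₁ → Set E₂ → Prop) : Prop :=
  Dom 𝒞 𝒟 R ∧ ∀ X Y, R X Y →
    (∀ A X', Step 𝒞 A X X' → ∃ Y', Step 𝒟 A Y Y' ∧ R X' Y') ∧
    (∀ A Y', Step 𝒟 A Y Y' → ∃ X', Step 𝒞 A X X' ∧ R X' Y')

/-- Reverse step bisimulation: an SB also matching reverse steps. -/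
def IsRSB (𝒞 : CS E₁ L) (𝒟 : CS E₂ L) (R : Set E₁ → Set E₂ → Prop) : Prop :=
  IsSB 𝒞 𝒟 R ∧ ∀ X Y, R X Y →
    (∀ A X', RStep 𝒞 A X X' → ∃ Y', RStep 𝒟 A Y Y' ∧ R X' Y') ∧
    (∀ A Y', RStep 𝒟 A Y Y' → ∃ X', RStep 𝒞 A X X' ∧ R X' Y')

/-- Reverse homogeneous step bisimulation: matches forward single-event
transitions and reverse homogeneous steps. -/
def IsRHSB (𝒞 : CS E₁ L) (𝒟 : CS E₂ L) (R : Set E₁ → Set E₂ → Prop) : Prop :=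
  Dom 𝒞 𝒟 R ∧ ∀ X Y, R X Y →
    (∀ a X', FTrans 𝒞 a X X' → ∃ Y', FTrans 𝒟 a Y Y' ∧ R X' Y') ∧
    (∀ a Y', FTrans 𝒟 a Y Y' → ∃ X', FTrans 𝒞 a X X' ∧ R X' Y') ∧
    (∀ A X', Hom A → RStep 𝒞 A X X' → ∃ Y', RStep 𝒟 A Y Y' ∧ R X' Y') ∧
    (∀ A Y', Hom A → RStep 𝒟 A Y Y' → ∃ X', RStep 𝒞 A X X' ∧ R X' Y')

/-- Reverse homogeneous equidepth step bisimulation. -/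
def IsRHESB (𝒞 : CS E₁ L) (𝒟 : CS E₂ L) (R : Set E₁ → Set E₂ → Prop) : Prop :=
  Dom 𝒞 𝒟 R ∧ ∀ X Y, R X Y →
    (∀ a X', FTrans 𝒞 a X X' → ∃ Y', FTrans 𝒟 a Y Y' ∧ R X' Y') ∧
    (∀ a Y', FTrans 𝒟 a Y Y' → ∃ X', FTrans 𝒞 a X X' ∧ R X' Y') ∧
    (∀ A X', Hom A → REqStep 𝒞 A X X' → ∃ Y', REqStep 𝒟 A Y Y' ∧ R X' Y') ∧
    (∀ A Y', Hom A → REqStep 𝒟 A Y Y' → ∃ X', REqStep 𝒞 A X X' ∧ R X' Y')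

/-- Depth-respecting bisimulation. -/
def IsDB (𝒞 : CS E₁ L) (𝒟 : CS E₂ L) (R : Set E₁ → Set E₂ → Prop) : Prop :=
  Dom 𝒞 𝒟 R ∧ ∀ X Y, R X Y →
    (∀ a k X', FTransD 𝒞 a k X X' → ∃ Y', FTransD 𝒟 a k Y Y' ∧ R X' Y') ∧
    (∀ a k Y', FTransD 𝒟 a k Y Y' → ∃ X', FTransD 𝒞 a k X X' ∧ R X' Y')

/-- Reverse depth-respecting bisimulation. -/
def IsRDB (𝒞 : CS E₁ L) (𝒟 : CS E₂ L) (R : Set E₁ → Set E₂ → Prop) : Prop :=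
  IsDB 𝒞 𝒟 R ∧ ∀ X Y, R X Y →
    (∀ a k X', RTransD 𝒞 a k X X' → ∃ Y', RTransD 𝒟 a k Y Y' ∧ R X' Y') ∧
    (∀ a k Y', RTransD 𝒟 a k Y Y' → ∃ X', RTransD 𝒞 a k X X' ∧ R X' Y')

/-- The lifting of a configuration structure w.r.t. a configuration `M`. -/
def lift (𝒞 : CS E L) (M : Set E) : CS E L where
  C := {Z | ∃ X, X ∈ 𝒞.C ∧ M ⊆ X ∧ minE 𝒞 X = minE 𝒞 M ∧ Z = X \ M}
  finite := by
    rintro Z ⟨X, hX, -, -, rfl⟩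
    exact (𝒞.finite X hX).subset Set.diff_subset
  label := 𝒞.label

/-- Events of `X` of depth at most `n`. -/
def levelLe (𝒞 : CS E L) (X : Set E) (n : ℕ) : Set E :=
  {e | e ∈ X ∧ depth 𝒞 X e ≤ n}

/-- Events of `X` of depth exactly `n`. -/
def levelEq (𝒞 : CS E L) (X : Set E) (n : ℕ) : Set E :=
  {e | e ∈ X ∧ depth 𝒞 X e = n}

/-- No equidepth auto-concurrency: distinct concurrent events never share
both label and depth. -/
def NoEqAC (𝒞 : CS E L) : Prop :=
  ∀ X ∈ 𝒞.C, ∀ d ∈ X, ∀ e ∈ X, co 𝒞 X d e → 𝒞.label d = 𝒞.label e →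
    depth 𝒞 X d = depth 𝒞 X e → d = e

/-- `f` (a set of pairs) is a label- and order-preserving isomorphism
between configurations `X` and `Y`. -/
def IsIso (𝒞 : CS E₁ L) (𝒟 : CS E₂ L) (X : Set E₁) (Y : Set E₂)
    (f : Set (E₁ × E₂)) : Prop :=
  (∀ p ∈ f, p.1 ∈ X ∧ p.2 ∈ Y) ∧
  (∀ d ∈ X, ∃! e, (d, e) ∈ f) ∧
  (∀ e ∈ Y, ∃! d, (d, e) ∈ f) ∧
  (∀ p ∈ f, 𝒞.label p.1 = 𝒟.label p.2) ∧
  (∀ p ∈ f, ∀ q ∈ f, (lt 𝒞 X p.1 q.1 ↔ lt 𝒟 Y p.2 q.2))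

/-- Hereditary history-preserving bisimulation. -/
def IsHH (𝒞 : CS E₁ L) (𝒟 : CS E₂ L)
    (R : Set (Set E₁ × Set E₂ × Set (E₁ × E₂))) : Prop :=
  (∅, ∅, ∅) ∈ R ∧
  ∀ X Y f, (X, Y, f) ∈ R →
    X ∈ 𝒞.C ∧ Y ∈ 𝒟.C ∧ IsIso 𝒞 𝒟 X Y f ∧
    (∀ a X', FTrans 𝒞 a X X' → ∃ Y' f', FTrans 𝒟 a Y Y' ∧
      (X', Y', f') ∈ R ∧ {p ∈ f' | p.1 ∈ X} = f) ∧
    (∀ a Y', FTrans 𝒟 a Y Y' → ∃ X' f', FTrans 𝒞 a X X' ∧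
      (X', Y', f') ∈ R ∧ {p ∈ f' | p.1 ∈ X} = f) ∧
    (∀ a X', RTrans 𝒞 a X X' → ∃ Y' f', RTrans 𝒟 a Y Y' ∧
      (X', Y', f') ∈ R ∧ {p ∈ f | p.1 ∈ X'} = f')

end CS

open CS

/-!
Write `P X` for the multiset of pairs `(label, depth)` of the events of `X`; it suffices to show
`P X = P Y`, by induction on size. Say the maximal depth `n` of `X` is at least that of `Y`.
Removing from `X` all `c` events of depth `n` with a given label `a` is a reverse homogeneous
equidepth step. Its match in `Y` removes `c` events labelled `a` of a common depth `k`, and since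
depths do not change in sub-configurations the induction hypothesis gives
`P X + c • (a, k) = P Y + c • (a, n)`; symmetrically from `Y`. If `k ≠ n`, comparing
multiplicities shows that the maximal depth `m` of `Y` is below `n`, that all pairs of depth `m`
in `P Y` have label `a`, and that `(a, m) ∉ P X`. But depths in a stable configuration are
contiguous, so `X` has an event of depth `m`, and its pair lies in `P Y`.
-/

section DepthProfiles

variable {L : Type*}

def DepthsContiguous (P : Multiset (L × ℕ)) : Prop :=
  ∀ p ∈ P, 0 < p.2 ∧ ∀ j, 0 < j → j < p.2 → ∃ x, (x, j) ∈ P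

/-- Removing from `P` all copies of a pair `(a, n)` of maximal depth is matched by removing from
`Q` equally many copies of `(a, k)`, for a single `k`, with equal remainders. -/
def MatchesTopClasses [DecidableEq L] (P Q : Multiset (L × ℕ)) : Prop :=
  ∀ a n, (a, n) ∈ P → (∀ p ∈ P, p.2 ≤ n) →
    ∃ k, P + .replicate (P.count (a, n)) (a, k) = Q + .replicate (P.count (a, n)) (a, n)

theorem eq_of_matchesTopClasses [DecidableEq L] {P Q : Multiset (L × ℕ)}
    (hP : DepthsContiguous P) (hQ : DepthsContiguous Q)
    (hPQ : MatchesTopClasses P Q) (hQP : MatchesTopClasses Q P) : P = Q := by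
  wlog hdom : ∀ q ∈ Q, ∃ p ∈ P, q.2 ≤ p.2 generalizing P Q
  · push Not at hdom
    obtain ⟨q, hq, hlt⟩ := hdom
    exact (this hQ hP hQP hPQ fun p hp => ⟨q, hq, (hlt p hp).le⟩).symm
  rcases eq_or_ne P 0 with rfl | hP0
  · exact (Multiset.eq_zero_of_forall_notMem fun q hq => by simpa using hdom q hq).symm
  obtain ⟨⟨a, n⟩, han, htop⟩ := Multiset.exists_max_image Prod.snd hP0
  obtain ⟨k, hk⟩ := hPQ a n han htop
  rcases eq_or_ne k n with rfl | hkn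
  · exact add_right_cancel hk
  by_contra hne
  have hanQ : (a, n) ∉ Q := by
    simpa [Multiset.count_replicate, hkn] using congrArg (Multiset.count (a, n)) hk
  have hakQ : (a, k) ∈ Q := by
    have : (a, k) ∈ P + .replicate (P.count (a, n)) (a, k) :=
      Multiset.mem_add.2 (Or.inr (Multiset.mem_replicate.2 ⟨(Multiset.count_pos.2 han).ne', rfl⟩))
    simpa [hk, hkn, Multiset.mem_replicate] using this
  -- A top class `(b, j)` of `Q` can only be matched by moving it to depth `n` of `P`.
  have htopQ : ∀ b j, (b, j) ∈ Q → (∀ q ∈ Q, q.2 ≤ j) → b = a ∧ (b, j) ∉ P := by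
    intro b j hbj htopj
    obtain ⟨k', hk'⟩ := hQP b j hbj htopj
    have hk'j : k' ≠ j := by
      rintro rfl
      exact hne (add_right_cancel hk').symm
    have hba : b = a := by
      by_contra hba
      have := congrArg (Multiset.count (a, n)) hk'
      simp [Multiset.count_replicate, hba, hanQ] at this
      exact (Multiset.count_pos.2 han).ne this
    subst hba
    refine ⟨rfl, ?_⟩
    simpa [Multiset.count_replicate, hk'j] using congrArg (Multiset.count (b, j)) hk'
  obtain ⟨⟨b, m⟩, hbm, htopm⟩ :=
    Multiset.exists_max_image Prod.snd (s := Q) (by rintro rfl; simp at hakQ)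
  obtain ⟨hba, -⟩ := htopQ b m hbm htopm
  have hmn : m < n := by
    obtain ⟨p, hp, hmp⟩ := hdom _ hbm
    refine lt_of_le_of_ne (hmp.trans (htop p hp)) ?_
    rintro rfl
    exact hanQ (hba ▸ hbm)
  obtain ⟨x, hx⟩ := (hP _ han).2 m (hQ _ hbm).1 hmn
  have hxQ : (x, m) ∈ Q := by
    have : (x, m) ∈ P + .replicate (P.count (a, n)) (a, k) := Multiset.mem_add.2 (Or.inl hx)
    simpa [hk, hmn.ne, Multiset.mem_replicate] using this
  exact (htopQ x m hxQ htopm).2 hx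

end DepthProfiles

namespace CS

variable {E : Type u} {L : Type v} {𝒞 : CS E L}

section Labels

theorem labelMS_def {S : Set E} (hS : S.Finite) : labelMS 𝒞 S = hS.toFinset.val.map 𝒞.label := by
  classical
  exact dif_pos hS

theorem count_labelMS [DecidableEq L] {S : Set E} (hS : S.Finite) (a : L) :
    (labelMS 𝒞 S).count a = {e ∈ S | 𝒞.label e = a}.ncard := by
  classical
  rw [labelMS_def hS, Multiset.count_map, ← Finset.filter_val, Finset.card_val,
    ← Set.ncard_coe_finset, Finset.coe_filter]
  congr 1
  ext e
  simp [eq_comm]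

theorem mem_labelMS {S : Set E} (hS : S.Finite) {a : L} :
    a ∈ labelMS 𝒞 S ↔ ∃ e ∈ S, 𝒞.label e = a := by
  simp [labelMS_def hS]

theorem labelMS_union {S T : Set E} (hS : S.Finite) (hT : T.Finite) (hST : Disjoint S T) :
    labelMS 𝒞 (S ∪ T) = labelMS 𝒞 S + labelMS 𝒞 T := by
  classical
  ext a
  rw [Multiset.count_add, count_labelMS (hS.union hT), count_labelMS hS, count_labelMS hT,
    ← Set.ncard_union_eq (hST.mono (Set.sep_subset _ _) (Set.sep_subset _ _))
      (hS.subset (Set.sep_subset _ _)) (hT.subset (Set.sep_subset _ _))]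
  exact congrArg Set.ncard Set.sep_union

theorem labelMS_congr {𝒟 : CS E L} {S : Set E} (hS : S.Finite)
    (h : ∀ e ∈ S, 𝒞.label e = 𝒟.label e) : labelMS 𝒞 S = labelMS 𝒟 S := by
  rw [labelMS_def hS, labelMS_def hS]
  exact Multiset.map_congr rfl fun e he => h e (hS.mem_toFinset.1 he)

theorem labelMS_eq_replicate {S : Set E} (hS : S.Finite) {a : L}
    (h : ∀ e ∈ S, 𝒞.label e = a) : labelMS 𝒞 S = .replicate S.ncard a := by
  rw [labelMS_def hS, Multiset.eq_replicate, Multiset.card_map, Finset.card_val,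
    Set.ncard_eq_toFinset_card S hS]
  simp only [Multiset.mem_map, Finset.mem_val, Set.Finite.mem_toFinset, true_and]
  exact fun b ⟨e, he, hb⟩ => hb ▸ h e he

end Labels

theorem le.trans {X : Set E} {a b c : E} (h₁ : le 𝒞 X a b) (h₂ : le 𝒞 X b c) : le 𝒞 X a c :=
  fun Y hY hYX hc => h₁ Y hY hYX (h₂ Y hY hYX hc)

namespace IsStable

theorem induction (h𝒞 : IsStable 𝒞) {P : Set E → Prop} (empty : P ∅)
    (remove : ∀ X ∈ 𝒞.C, ∀ x ∈ X, X \ {x} ∈ 𝒞.C → P (X \ {x}) → P X) :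
    ∀ X ∈ 𝒞.C, P X := by
  intro X hX
  induction hn : X.ncard using Nat.strong_induction_on generalizing X with
  | _ n ih =>
    rcases X.eq_empty_or_nonempty with rfl | hne
    · exact empty
    obtain ⟨x, hx, hXx⟩ := h𝒞.2.1 X hX hne.ne_empty
    exact remove X hX x hx hXx
      (ih _ (hn ▸ Set.ncard_sdiff_singleton_lt_of_mem hx (𝒞.finite X hX)) _ hXx rfl)

theorem exists_separating (h𝒞 : IsStable 𝒞) {X : Set E} (hX : X ∈ 𝒞.C) {d e : E}
    (hd : d ∈ X) (he : e ∈ X) (hde : d ≠ e) : ∃ Y ∈ 𝒞.C, Y ⊆ X ∧ ¬(d ∈ Y ↔ e ∈ Y) := by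
  revert d e
  refine h𝒞.induction (P := fun X => ∀ {d e}, d ∈ X → e ∈ X → d ≠ e →
    ∃ Y ∈ 𝒞.C, Y ⊆ X ∧ ¬(d ∈ Y ↔ e ∈ Y)) (fun hd => absurd hd id) ?_ X hX
  intro X _ x hx hXx ih d e hd he hde
  by_cases hxd : x = d
  · exact ⟨X \ {x}, hXx, Set.sdiff_subset, by simp [hxd, hde.symm, he]⟩
  by_cases hxe : x = e
  · exact ⟨X \ {x}, hXx, Set.sdiff_subset, by simp [hxe, hde, hd]⟩
  obtain ⟨Y, hY, hYX, hsep⟩ := ih ⟨hd, Ne.symm hxd⟩ ⟨he, Ne.symm hxe⟩ hde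
  exact ⟨Y, hY, hYX.trans Set.sdiff_subset, hsep⟩

end IsStable

theorem le.antisymm (h𝒞 : IsStable 𝒞) {X : Set E} (hX : X ∈ 𝒞.C) {d e : E} (hd : d ∈ X)
    (he : e ∈ X) (h₁ : le 𝒞 X d e) (h₂ : le 𝒞 X e d) : d = e := by
  by_contra hde
  obtain ⟨Y, hY, hYX, hsep⟩ := h𝒞.exists_separating hX hd he hde
  exact hsep ⟨h₂ Y hY hYX, h₁ Y hY hYX⟩

theorem lt.trans (h𝒞 : IsStable 𝒞) {X : Set E} (hX : X ∈ 𝒞.C) {a b c : E} (ha : a ∈ X)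
    (hb : b ∈ X) (h₁ : lt 𝒞 X a b) (h₂ : lt 𝒞 X b c) : lt 𝒞 X a c := by
  refine ⟨h₁.1.trans h₂.1, ?_⟩
  rintro rfl
  exact h₁.2 (h₁.1.antisymm h𝒞 hX ha hb h₂.1)

theorem le_subconfig_iff (h𝒞 : IsStable 𝒞) {X Z : Set E} (hX : X ∈ 𝒞.C) (hZ : Z ∈ 𝒞.C)
    (hZX : Z ⊆ X) {d e : E} (he : e ∈ Z) : le 𝒞 Z d e ↔ le 𝒞 X d e := by
  refine ⟨fun h Y hY hYX heY => ?_, fun h Y hY hYZ => h Y hY (hYZ.trans hZX)⟩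
  have hYZ : Y ∩ Z ∈ 𝒞.C := h𝒞.2.2.2 Y hY Z hZ X hX (Set.union_subset hYX hZX)
  exact (h _ hYZ Set.inter_subset_right ⟨heY, he⟩).1

theorem lt_subconfig_iff (h𝒞 : IsStable 𝒞) {X Z : Set E} (hX : X ∈ 𝒞.C) (hZ : Z ∈ 𝒞.C)
    (hZX : Z ⊆ X) {d e : E} (he : e ∈ Z) : lt 𝒞 Z d e ↔ lt 𝒞 X d e :=
  and_congr_left' (le_subconfig_iff h𝒞 hX hZ hZX he)

namespace IsStable

theorem sdiff_singleton_mem (h𝒞 : IsStable 𝒞) {X : Set E} (hX : X ∈ 𝒞.C) {e : E} (he : e ∈ X)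
    (hmax : ∀ f ∈ X, ¬lt 𝒞 X e f) : X \ {e} ∈ 𝒞.C := by
  revert e
  refine h𝒞.induction (P := fun X => ∀ {e}, e ∈ X → (∀ f ∈ X, ¬lt 𝒞 X e f) → X \ {e} ∈ 𝒞.C)
    (fun he => absurd he id) ?_ X hX
  intro X hX x hx hXx ih e he hmax
  rcases eq_or_ne x e with rfl | hxe
  · exact hXx
  have hXxe : (X \ {x}) \ {e} ∈ 𝒞.C := ih ⟨he, hxe.symm⟩ fun f hf hlt =>
    hmax f hf.1 ((lt_subconfig_iff h𝒞 hX hXx Set.sdiff_subset hf).1 hlt)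
  -- `X \ {e}` is `(X \ {x}) \ {e}` together with a sub-configuration containing `x` but not `e`.
  have hnle : ¬le 𝒞 X e x := fun hle => hmax x hx ⟨hle, hxe.symm⟩
  simp only [le, not_forall] at hnle
  obtain ⟨W, hW, hWX, hxW, heW⟩ := hnle
  have hunion : (X \ {x}) \ {e} ∪ W = X \ {e} := by
    ext y
    by_cases hyx : y = x <;> by_cases hye : y = e <;>
      simp_all [show ∀ y ∈ W, y ∈ X from hWX]
  exact hunion ▸ h𝒞.2.2.1 _ hXxe W hW X hX
    (Set.union_subset (Set.sdiff_subset.trans Set.sdiff_subset) hWX)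

theorem sdiff_mem (h𝒞 : IsStable 𝒞) {X A : Set E} (hX : X ∈ 𝒞.C) (hAX : A ⊆ X)
    (hmax : ∀ e ∈ A, ∀ f ∈ X, ¬lt 𝒞 X e f) : X \ A ∈ 𝒞.C := by
  induction A, (𝒞.finite X hX).subset hAX using Set.Finite.induction_on with
  | empty => simpa using hX
  | @insert a s _ _ ih =>
    have hXs : X \ s ∈ 𝒞.C := ih (fun e he => hAX (.inr he)) fun e he => hmax e (.inr he)
    have ha : a ∈ X \ s := ⟨hAX (.inl rfl), ‹a ∉ s›⟩
    rw [Set.insert_eq, Set.union_comm, ← Set.sdiff_sdiff]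
    exact h𝒞.sdiff_singleton_mem hXs ha fun f hf hlt =>
      hmax a (.inl rfl) f hf.1 ((lt_subconfig_iff h𝒞 hX hXs Set.sdiff_subset hf).1 hlt)

end IsStable

section Depth

def chainLengths (𝒞 : CS E L) (X : Set E) (e : E) : Set ℕ :=
  {n | ∃ l : List E, l.length = n ∧ l.IsChain (lt 𝒞 X) ∧ (∀ x ∈ l, x ∈ X) ∧ l.getLast? = some e}

theorem depth_eq_sSup (X : Set E) (e : E) : depth 𝒞 X e = sSup (chainLengths 𝒞 X e) := rfl

theorem nodup_of_isChain (h𝒞 : IsStable 𝒞) {X : Set E} (hX : X ∈ 𝒞.C) {l : List E}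
    (hc : l.IsChain (lt 𝒞 X)) (hl : ∀ x ∈ l, x ∈ X) : l.Nodup := by
  let r (a b : E) : Prop := lt 𝒞 X a b ∧ a ∈ X ∧ b ∈ X
  have : Trans r r r := ⟨fun h₁ h₂ => ⟨h₁.1.trans h𝒞 hX h₁.2.1 h₁.2.2 h₂.1, h₁.2.1, h₂.2.2⟩⟩
  have hr : l.IsChain r := hc.imp_of_mem_imp fun a b ha hb h => ⟨h, hl a ha, hl b hb⟩
  exact (List.isChain_iff_pairwise.1 hr).imp fun h => h.1.2

theorem chainLengths_bddAbove (h𝒞 : IsStable 𝒞) {X : Set E} (hX : X ∈ 𝒞.C) (e : E) :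
    BddAbove (chainLengths 𝒞 X e) := by
  classical
  refine ⟨X.ncard, ?_⟩
  rintro _ ⟨l, rfl, hc, hl, -⟩
  rw [← List.toFinset_card_of_nodup (nodup_of_isChain h𝒞 hX hc hl), ← Set.ncard_coe_finset]
  exact Set.ncard_le_ncard (fun x hx => hl x (List.mem_toFinset.1 hx)) (𝒞.finite X hX)

theorem one_mem_chainLengths {X : Set E} {e : E} (he : e ∈ X) : 1 ∈ chainLengths 𝒞 X e :=
  ⟨[e], rfl, .singleton e, by simpa, rfl⟩

theorem le_depth (h𝒞 : IsStable 𝒞) {X : Set E} (hX : X ∈ 𝒞.C) {e : E} {n : ℕ}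
    (hn : n ∈ chainLengths 𝒞 X e) : n ≤ depth 𝒞 X e :=
  le_csSup (chainLengths_bddAbove h𝒞 hX e) hn

theorem depth_mem_chainLengths (h𝒞 : IsStable 𝒞) {X : Set E} (hX : X ∈ 𝒞.C) {e : E}
    (he : e ∈ X) : depth 𝒞 X e ∈ chainLengths 𝒞 X e :=
  Nat.sSup_mem ⟨1, one_mem_chainLengths he⟩ (chainLengths_bddAbove h𝒞 hX e)

theorem depth_pos (h𝒞 : IsStable 𝒞) {X : Set E} (hX : X ∈ 𝒞.C) {e : E} (he : e ∈ X) :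
    0 < depth 𝒞 X e :=
  le_depth h𝒞 hX (one_mem_chainLengths he)

theorem depth_lt_depth_of_lt (h𝒞 : IsStable 𝒞) {X : Set E} (hX : X ∈ 𝒞.C) {d e : E}
    (hd : d ∈ X) (he : e ∈ X) (hde : lt 𝒞 X d e) : depth 𝒞 X d < depth 𝒞 X e := by
  obtain ⟨l, hlen, hc, hl, hlast⟩ := depth_mem_chainLengths h𝒞 hX hd
  refine Nat.lt_of_succ_le (le_depth h𝒞 hX ⟨l ++ [e], by simp [hlen], ?_, ?_, by simp⟩)
  · exact hc.append (.singleton e) (by simp [hlast, hde])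
  · simpa [or_imp, forall_and] using ⟨hl, he⟩

theorem depth_subconfig (h𝒞 : IsStable 𝒞) {X Z : Set E} (hX : X ∈ 𝒞.C) (hZ : Z ∈ 𝒞.C)
    (hZX : Z ⊆ X) {e : E} (he : e ∈ Z) : depth 𝒞 Z e = depth 𝒞 X e := by
  rw [depth_eq_sSup, depth_eq_sSup]
  congr 1
  ext n
  constructor
  · rintro ⟨l, hlen, hc, hl, hlast⟩
    exact ⟨l, hlen, hc.imp_of_mem_imp fun a b _ hb h =>
      (lt_subconfig_iff h𝒞 hX hZ hZX (hl b hb)).1 h, fun x hx => hZX (hl x hx), hlast⟩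
  · rintro ⟨l, hlen, hc, hl, hlast⟩
    -- `Z` is downward closed in `X`, and the chain ends in `Z`.
    have hlZ : ∀ x ∈ l, x ∈ Z := hc.backwards_induction (· ∈ Z) l
      (fun x y hxy hy => hxy.1 Z hZ hZX hy)
      (fun _ => by rwa [List.getLast_of_mem_getLast? hlast])
    exact ⟨l, hlen, hc.imp_of_mem_imp fun a b _ hb h =>
      (lt_subconfig_iff h𝒞 hX hZ hZX (hlZ b hb)).2 h, hlZ, hlast⟩

theorem exists_depth_eq_pred (h𝒞 : IsStable 𝒞) {X : Set E} (hX : X ∈ 𝒞.C) {e : E}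
    (he : e ∈ X) (h : 1 < depth 𝒞 X e) : ∃ d ∈ X, depth 𝒞 X d = depth 𝒞 X e - 1 := by
  obtain ⟨l, hlen, hc, hl, hlast⟩ := depth_mem_chainLengths h𝒞 hX he
  have hne : l.dropLast ≠ [] := by
    rw [← List.length_pos_iff, List.length_dropLast]
    omega
  set d := l.dropLast.getLast hne
  have hd : d ∈ X := hl d (List.mem_of_mem_dropLast (List.getLast_mem hne))
  have hde : lt 𝒞 X d e := by
    simpa [List.getLast_of_mem_getLast? hlast] using hc.rel_getLast_dropLast hne
  have hdl : depth 𝒞 X e - 1 ∈ chainLengths 𝒞 X d :=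
    ⟨l.dropLast, by simp [hlen], hc.dropLast, fun x hx => hl x (List.mem_of_mem_dropLast hx),
      List.getLast?_eq_some_getLast hne⟩
  have := le_depth h𝒞 hX hdl
  have := depth_lt_depth_of_lt h𝒞 hX hd he hde
  exact ⟨d, hd, by omega⟩

theorem exists_depth_eq (h𝒞 : IsStable 𝒞) {X : Set E} (hX : X ∈ 𝒞.C) {e : E} (he : e ∈ X)
    {j : ℕ} (hj : 0 < j) (hje : j < depth 𝒞 X e) : ∃ d ∈ X, depth 𝒞 X d = j := by
  induction hn : depth 𝒞 X e using Nat.strong_induction_on generalizing e with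
  | _ n ih =>
    obtain ⟨d, hd, hdn⟩ := exists_depth_eq_pred h𝒞 hX he (by omega)
    rcases eq_or_lt_of_le (show j ≤ n - 1 by omega) with rfl | hjd
    · exact ⟨d, hd, hdn.trans (by rw [hn])⟩
    · exact ih (n - 1) (by omega) hd (by omega) (by omega)

end Depth

section LabelDepth

noncomputable def labelDepthMS (𝒞 : CS E L) (X : Set E) : Multiset (L × ℕ) :=
  labelMS ⟨𝒞.C, 𝒞.finite, fun e => (𝒞.label e, depth 𝒞 X e)⟩ X

theorem mem_labelDepthMS {X : Set E} (hX : X.Finite) {p : L × ℕ} :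
    p ∈ labelDepthMS 𝒞 X ↔ ∃ e ∈ X, (𝒞.label e, depth 𝒞 X e) = p :=
  mem_labelMS hX

theorem count_labelDepthMS [DecidableEq L] {X : Set E} (hX : X.Finite) (p : L × ℕ) :
    (labelDepthMS 𝒞 X).count p = {e ∈ X | (𝒞.label e, depth 𝒞 X e) = p}.ncard :=
  count_labelMS hX p

theorem count_labelMS_levelEq [DecidableEq L] {X : Set E} (hX : X.Finite) (a : L) (n : ℕ) :
    (labelMS 𝒞 (levelEq 𝒞 X n)).count a = (labelDepthMS 𝒞 X).count (a, n) := by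
  rw [count_labelMS (hX.subset fun _ he => he.1), count_labelDepthMS hX]
  congr 1
  ext e
  simp only [levelEq, Set.mem_ofPred_eq, Prod.mk.injEq]
  tauto

theorem labelDepthMS_eq_add (h𝒞 : IsStable 𝒞) {Y Y' : Set E} (hY : Y ∈ 𝒞.C) (hY' : Y' ∈ 𝒞.C)
    (hY'Y : Y' ⊆ Y) {p : L × ℕ} (hp : ∀ e ∈ Y \ Y', (𝒞.label e, depth 𝒞 Y e) = p) :
    labelDepthMS 𝒞 Y = labelDepthMS 𝒞 Y' + .replicate (Y \ Y').ncard p := by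
  have hfin : Y.Finite := 𝒞.finite Y hY
  rw [labelDepthMS, ← Set.union_sdiff_cancel hY'Y,
    labelMS_union (hfin.subset hY'Y) hfin.sdiff Set.disjoint_sdiff_right,
    Set.union_sdiff_cancel hY'Y, labelMS_eq_replicate hfin.sdiff hp]
  congr 1
  exact labelMS_congr (hfin.subset hY'Y) fun e he => by
    simp [depth_subconfig h𝒞 hY hY' hY'Y he]

theorem depthsContiguous_labelDepthMS (h𝒞 : IsStable 𝒞) {X : Set E} (hX : X ∈ 𝒞.C) :
    DepthsContiguous (labelDepthMS 𝒞 X) := by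
  have hfin := 𝒞.finite X hX
  rintro _ hp
  obtain ⟨e, he, rfl⟩ := (mem_labelDepthMS hfin).1 hp
  refine ⟨depth_pos h𝒞 hX he, fun j hj hje => ?_⟩
  obtain ⟨d, hd, rfl⟩ := exists_depth_eq h𝒞 hX he hj hje
  exact ⟨𝒞.label d, (mem_labelDepthMS hfin).2 ⟨d, hd, rfl⟩⟩

end LabelDepth

section Steps

theorem hom_replicate (c : ℕ) (a : L) : Hom (.replicate c a) := fun _ hx _ hy =>
  (Multiset.eq_of_mem_replicate hx).trans (Multiset.eq_of_mem_replicate hy).symm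

theorem reqStep_sdiff (h𝒞 : IsStable 𝒞) {X A : Set E} (hX : X ∈ 𝒞.C) (hAX : A ⊆ X) {a : L}
    {n : ℕ} (hA : ∀ e ∈ A, (𝒞.label e, depth 𝒞 X e) = (a, n))
    (htop : ∀ f ∈ X, depth 𝒞 X f ≤ n) : REqStep 𝒞 (.replicate A.ncard a) X (X \ A) := by
  have hAfin : A.Finite := (𝒞.finite X hX).subset hAX
  have hdepth : ∀ e ∈ A, depth 𝒞 X e = n := fun e he => (Prod.mk.inj (hA e he)).2
  have hXA : X \ (X \ A) = A := Set.sdiff_sdiff_cancel_left hAX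
  have hmax : ∀ e ∈ A, ∀ f ∈ X, ¬lt 𝒞 X e f := fun e he f hf hef => by
    have := depth_lt_depth_of_lt h𝒞 hX (hAX he) hf hef
    have := htop f hf
    have := hdepth e he
    omega
  have hco : ∀ d ∈ A, ∀ e ∈ A, co 𝒞 X d e := fun d hd e he =>
    ⟨hmax d hd e (hAX he), hmax e he d (hAX hd)⟩
  refine ⟨⟨h𝒞.sdiff_mem hX hAX hmax, hX, Set.sdiff_subset, hAfin.toFinset, by simp [hXA],
    fun d hd e he => hco d (hAfin.mem_toFinset.1 hd) e (hAfin.mem_toFinset.1 he), ?_⟩, ?_⟩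
  · rw [← labelMS_def hAfin]
    exact labelMS_eq_replicate hAfin fun e he => (Prod.mk.inj (hA e he)).1
  · rw [hXA]
    intro d hd e he
    rw [hdepth d hd, hdepth e he]

theorem REqStep.exists_labelDepthMS_eq_add (h𝒞 : IsStable 𝒞) {c : ℕ} {a : L} {Y Y' : Set E}
    (h : REqStep 𝒞 (.replicate c a) Y Y') (hc : 0 < c) :
    ∃ k, labelDepthMS 𝒞 Y = labelDepthMS 𝒞 Y' + .replicate c (a, k) := by
  obtain ⟨⟨hY', hY, hY'Y, F, hF, -, hlabels⟩, hdepth⟩ := h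
  have hcard : (Y \ Y').ncard = c := by
    simpa [← hF, Set.ncard_coe_finset] using congrArg Multiset.card hlabels
  have hlabel : ∀ e ∈ Y \ Y', 𝒞.label e = a := fun e he => by
    rw [← hF, Finset.mem_coe] at he
    exact Multiset.eq_of_mem_replicate (hlabels ▸ Multiset.mem_map_of_mem 𝒞.label he)
  obtain ⟨b, hb⟩ := Set.nonempty_of_ncard_ne_zero (hcard ▸ hc.ne')
  exact ⟨depth 𝒞 Y b, hcard ▸ labelDepthMS_eq_add h𝒞 hY hY' hY'Y fun e he =>
    Prod.ext (hlabel e he) (hdepth e he b hb)⟩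

end Steps

section Bisimulation

variable {E₁ E₂ : Type u} {𝒞₁ : CS E₁ L} {𝒞₂ : CS E₂ L} {R : Set E₁ → Set E₂ → Prop}

theorem IsRHESB.symm (hR : IsRHESB 𝒞₁ 𝒞₂ R) : IsRHESB 𝒞₂ 𝒞₁ fun Y X => R X Y :=
  ⟨⟨hR.1.1, fun _ _ h => (hR.1.2 _ _ h).symm⟩, fun _ _ h =>
    let ⟨h₁, h₂, h₃, h₄⟩ := hR.2 _ _ h
    ⟨h₂, h₁, h₄, h₃⟩⟩

theorem IsRHESB.matchesTopClasses [DecidableEq L] (h𝒞₁ : IsStable 𝒞₁) (h𝒞₂ : IsStable 𝒞₂)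
    (hR : IsRHESB 𝒞₁ 𝒞₂ R) {X : Set E₁} {Y : Set E₂} (hXY : R X Y)
    (ih : ∀ X' Y', R X' Y' →
      Multiset.card (labelDepthMS 𝒞₁ X') + Multiset.card (labelDepthMS 𝒞₂ Y') <
        Multiset.card (labelDepthMS 𝒞₁ X) + Multiset.card (labelDepthMS 𝒞₂ Y) →
      labelDepthMS 𝒞₁ X' = labelDepthMS 𝒞₂ Y') :
    MatchesTopClasses (labelDepthMS 𝒞₁ X) (labelDepthMS 𝒞₂ Y) := by
  intro a n hmem htop
  have hX : X ∈ 𝒞₁.C := (hR.1.2 X Y hXY).1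
  have hfin := 𝒞₁.finite X hX
  set c := (labelDepthMS 𝒞₁ X).count (a, n)
  set A := {e ∈ X | (𝒞₁.label e, depth 𝒞₁ X e) = (a, n)}
  have hAX : A ⊆ X := Set.sep_subset _ _
  have hcA : A.ncard = c := (count_labelDepthMS hfin (a, n)).symm
  have hc : 0 < c := Multiset.count_pos.2 hmem
  have hstep := reqStep_sdiff h𝒞₁ hX hAX (fun e he => he.2) fun f hf =>
    htop _ ((mem_labelDepthMS hfin).2 ⟨f, hf, rfl⟩)
  rw [hcA] at hstep
  obtain ⟨Y', hstepY, hXY'⟩ := (hR.2 X Y hXY).2.2.1 _ _ (hom_replicate c a) hstep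
  obtain ⟨k, hY⟩ := hstepY.exists_labelDepthMS_eq_add h𝒞₂ hc
  have hX' : labelDepthMS 𝒞₁ X = labelDepthMS 𝒞₁ (X \ A) + .replicate c (a, n) := by
    have := labelDepthMS_eq_add h𝒞₁ hX hstep.1.1 Set.sdiff_subset (p := (a, n))
      fun e he => (Set.sdiff_sdiff_cancel_left hAX ▸ he).2
    rwa [Set.sdiff_sdiff_cancel_left hAX, hcA] at this
  have hrest := ih _ _ hXY' (by rw [hX', hY]; simp only [Multiset.card_add, Multiset.card_replicate]; omega)
  exact ⟨k, by rw [hX', hY, hrest, add_right_comm]⟩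

theorem IsRHESB.labelDepthMS_eq (h𝒞₁ : IsStable 𝒞₁) (h𝒞₂ : IsStable 𝒞₂)
    (hR : IsRHESB 𝒞₁ 𝒞₂ R) {X : Set E₁} {Y : Set E₂} (hXY : R X Y) :
    labelDepthMS 𝒞₁ X = labelDepthMS 𝒞₂ Y := by
  classical
  induction hN : Multiset.card (labelDepthMS 𝒞₁ X) + Multiset.card (labelDepthMS 𝒞₂ Y)
    using Nat.strong_induction_on generalizing X Y with
  | _ N ih =>
    obtain ⟨hX, hY⟩ := hR.1.2 X Y hXY
    exact eq_of_matchesTopClasses (depthsContiguous_labelDepthMS h𝒞₁ hX)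
      (depthsContiguous_labelDepthMS h𝒞₂ hY)
      (hR.matchesTopClasses h𝒞₁ h𝒞₂ hXY fun X' Y' h hlt => ih _ (hN ▸ hlt) h rfl)
      (hR.symm.matchesTopClasses h𝒞₂ h𝒞₁ hXY fun Y' X' h hlt =>
        (ih _ (by omega) h rfl).symm)

end Bisimulation

end CS

/-- configurations related by an RHESB have equal multisets of
labels at each depth level. -/
theorem stmt14 {E₁ E₂ : Type u} {L : Type v} (𝒞 : CS E₁ L) (𝒟 : CS E₂ L)
    (h𝒞 : IsStable 𝒞) (h𝒟 : IsStable 𝒟)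
    (R : Set E₁ → Set E₂ → Prop) (hR : IsRHESB 𝒞 𝒟 R)
    (X : Set E₁) (Y : Set E₂) (hXY : R X Y) :
    ∀ n : ℕ, labelMS 𝒞 (levelEq 𝒞 X n) = labelMS 𝒟 (levelEq 𝒟 Y n) := by
  classical
  intro n
  obtain ⟨hX, hY⟩ := hR.1.2 X Y hXY
  ext a
  rw [count_labelMS_levelEq (𝒞.finite X hX), count_labelMS_levelEq (𝒟.finite Y hY),
    hR.labelDepthMS_eq h𝒞 h𝒟 hXY]
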